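/- Let X be a linearly ordered set. For all ultrafilters u, v over X: u ⊴ v iff (m̃(u,v) = u or m̃(v,u) = u) iff (M̃(u,v) = v or M̃(v,u) = v); and u ≡ v iff (m̃(u,v) ≠ m̃(v,u) or u = v) iff (M̃(u,v) ≠ M̃(v,u) or u = v). -/
import Mathlib


/-- The ultrafilter extension of a binary relation `R` on `X`:
`u R̃ v` iff `{x | {y | R x y} ∈ v} ∈ u`. -/
def relExt {X : Type*} (R : X → X → Prop) (u v : Ultrafilter X) : Prop :=
  {x : X | {y : X | R x y} ∈ v} ∈ u

/-- `I_u`: the intersection of all downward closed sets belonging to `u`. -/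
def Iset {X : Type*} [LinearOrder X] (u : Ultrafilter X) : Set X :=
  ⋂₀ {I : Set X | I ∈ u ∧ ∀ ⦃a b : X⦄, a ≤ b → b ∈ I → a ∈ I}

/-- `J_u`: the intersection of all upward closed sets belonging to `u`. -/
def Jset {X : Type*} [LinearOrder X] (u : Ultrafilter X) : Set X :=
  ⋂₀ {J : Set X | J ∈ u ∧ ∀ ⦃a b : X⦄, a ≤ b → a ∈ J → b ∈ J}

/-- The ultrafilter extension of a binary operation `F` on `X`. -/
def opExt {X : Type*} (F : X → X → X) (u v : Ultrafilter X) : Ultrafilter X :=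
  u.bind (fun x => v.map (F x))

section Aux

variable {X : Type*} [LinearOrder X] {u v : Ultrafilter X}

lemma mem_opExt {F : X → X → X} {S : Set X} :
    S ∈ opExt F u v ↔ {x : X | {y : X | F x y ∈ S} ∈ v} ∈ u := Iff.rfl

lemma opExt_eq {F : X → X → X} {w : Ultrafilter X}
    (h : ∀ S ∈ w, S ∈ opExt F u v) : opExt F u v = w :=
  (Ultrafilter.coe_le_coe.mp fun _ hS => h _ hS).symm ▸ rfl

/-- If `¬ u ≤̃ v` then `{x | {y | y < x} ∈ v} ∈ u`. -/
lemma not_leExt (h : ¬ relExt (· ≤ ·) u v) : {x : X | {y : X | y < x} ∈ v} ∈ u := by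
  have := Ultrafilter.compl_mem_iff_notMem.mpr h
  refine Filter.mem_of_superset this fun x hx => ?_
  have : {y : X | x ≤ y} ∉ v := hx
  have := Ultrafilter.compl_mem_iff_notMem.mpr this
  refine Filter.mem_of_superset this fun y hy => ?_
  exact lt_of_not_ge hy

/-- If `¬ u ≥̃ v` then `{x | {y | x < y} ∈ v} ∈ u`. -/
lemma not_geExt (h : ¬ relExt (· ≥ ·) u v) : {x : X | {y : X | x < y} ∈ v} ∈ u := by
  have := Ultrafilter.compl_mem_iff_notMem.mpr h
  refine Filter.mem_of_superset this fun x hx => ?_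
  have : {y : X | x ≥ y} ∉ v := hx
  have := Ultrafilter.compl_mem_iff_notMem.mpr this
  refine Filter.mem_of_superset this fun y hy => ?_
  exact lt_of_not_ge hy

lemma min_eq_left' (h : relExt (· ≤ ·) u v) : opExt min u v = u := by
  refine opExt_eq fun S hS => mem_opExt.mpr ?_
  refine Filter.mem_of_superset (Filter.inter_mem hS h) fun x hx => ?_
  refine Filter.mem_of_superset hx.2 fun y hy => ?_
  simpa [min_eq_left hy] using hx.1

lemma min_eq_right_of_not_le (h : ¬ relExt (· ≤ ·) u v) : opExt min u v = v := by
  refine opExt_eq fun S hS => mem_opExt.mpr ?_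
  refine Filter.mem_of_superset (not_leExt h) fun x hx => ?_
  refine Filter.mem_of_superset (Filter.inter_mem hx hS) fun y hy => ?_
  simpa [min_eq_right hy.1.le] using hy.2

lemma min_eq_right' (h : relExt (· ≥ ·) u v) : opExt min u v = v := by
  refine opExt_eq fun S hS => mem_opExt.mpr ?_
  refine Filter.mem_of_superset h fun x hx => ?_
  refine Filter.mem_of_superset (Filter.inter_mem hx hS) fun y hy => ?_
  simpa [min_eq_right hy.1] using hy.2

lemma min_eq_left_of_not_ge (h : ¬ relExt (· ≥ ·) u v) : opExt min u v = u := by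
  refine opExt_eq fun S hS => mem_opExt.mpr ?_
  refine Filter.mem_of_superset (Filter.inter_mem hS (not_geExt h)) fun x hx => ?_
  refine Filter.mem_of_superset hx.2 fun y hy => ?_
  simpa [min_eq_left hy.le] using hx.1

lemma max_eq_right' (h : relExt (· ≤ ·) u v) : opExt max u v = v := by
  refine opExt_eq fun S hS => mem_opExt.mpr ?_
  refine Filter.mem_of_superset h fun x hx => ?_
  refine Filter.mem_of_superset (Filter.inter_mem hx hS) fun y hy => ?_
  simpa [max_eq_right hy.1] using hy.2

lemma max_eq_left_of_not_le (h : ¬ relExt (· ≤ ·) u v) : opExt max u v = u := by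
  refine opExt_eq fun S hS => mem_opExt.mpr ?_
  refine Filter.mem_of_superset (Filter.inter_mem hS (not_leExt h)) fun x hx => ?_
  refine Filter.mem_of_superset hx.2 fun y hy => ?_
  simpa [max_eq_left hy.le] using hx.1

lemma max_eq_left' (h : relExt (· ≥ ·) u v) : opExt max u v = u := by
  refine opExt_eq fun S hS => mem_opExt.mpr ?_
  refine Filter.mem_of_superset (Filter.inter_mem hS h) fun x hx => ?_
  refine Filter.mem_of_superset hx.2 fun y hy => ?_
  simpa [max_eq_left hy] using hx.1

lemma max_eq_right_of_not_ge (h : ¬ relExt (· ≥ ·) u v) : opExt max u v = v := by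
  refine opExt_eq fun S hS => mem_opExt.mpr ?_
  refine Filter.mem_of_superset (not_geExt h) fun x hx => ?_
  refine Filter.mem_of_superset (Filter.inter_mem hx hS) fun y hy => ?_
  simpa [max_eq_right hy.1.le] using hy.2

lemma relExt_refl (u : Ultrafilter X) : relExt (· ≤ ·) u u ∨ relExt (· ≥ ·) u u := by
  by_contra h
  push_neg at h
  obtain ⟨x, hx1, hx2⟩ := Ultrafilter.nonempty_of_mem
    (Filter.inter_mem (not_leExt h.1) (not_geExt h.2))
  obtain ⟨y, hy1, hy2⟩ := Ultrafilter.nonempty_of_mem (Filter.inter_mem hx1 hx2)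
  exact absurd (hy1.trans hy2) (lt_irrefl y)

end Aux

/-- Characterizations of `⊴` and `≡` in terms of `m̃` and `M̃`. -/
theorem stmt18 {X : Type*} [LinearOrder X] (u v : Ultrafilter X) :
    ((relExt (· ≤ ·) u v ∨ relExt (· ≥ ·) v u) ↔
      (opExt min u v = u ∨ opExt min v u = u)) ∧
    ((relExt (· ≤ ·) u v ∨ relExt (· ≥ ·) v u) ↔
      (opExt max u v = v ∨ opExt max v u = v)) ∧
    ((((relExt (· ≤ ·) u v ∨ relExt (· ≥ ·) v u) ∧
       (relExt (· ≤ ·) v u ∨ relExt (· ≥ ·) u v)) ↔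
      (opExt min u v ≠ opExt min v u ∨ u = v)) ∧
     (((relExt (· ≤ ·) u v ∨ relExt (· ≥ ·) v u) ∧
       (relExt (· ≤ ·) v u ∨ relExt (· ≥ ·) u v)) ↔
      (opExt max u v ≠ opExt max v u ∨ u = v))) := by
  refine ⟨⟨?_, ?_⟩, ⟨?_, ?_⟩, ⟨?_, ?_⟩, ?_, ?_⟩
  · rintro (h | h)
    · exact Or.inl (min_eq_left' h)
    · exact Or.inr (min_eq_right' h)
  · rintro (h | h)
    · by_cases hP : relExt (· ≤ ·) u v
      · exact Or.inl hP
      · have := (min_eq_right_of_not_le hP).symm.trans h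
        subst this; exact relExt_refl _
    · by_cases hP : relExt (· ≥ ·) v u
      · exact Or.inr hP
      · have := (min_eq_left_of_not_ge hP).symm.trans h
        subst this; exact relExt_refl _
  · rintro (h | h)
    · exact Or.inl (max_eq_right' h)
    · exact Or.inr (max_eq_left' h)
  · rintro (h | h)
    · by_cases hP : relExt (· ≤ ·) u v
      · exact Or.inl hP
      · have := (max_eq_left_of_not_le hP).symm.trans h
        subst this; exact relExt_refl _
    · by_cases hP : relExt (· ≥ ·) v u
      · exact Or.inr hP
      · have := (max_eq_right_of_not_ge hP).symm.trans h
        subst this; exact relExt_refl _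
  · rintro ⟨h1, h2⟩
    by_cases huv : u = v
    · exact Or.inr huv
    · refine Or.inl ?_
      rcases h1 with hP1 | hP2 <;> rcases h2 with hQ1 | hQ2
      · rw [min_eq_left' hP1, min_eq_left' hQ1]; exact huv
      · exact absurd ((min_eq_left' hP1).symm.trans (min_eq_right' hQ2)) huv
      · exact absurd ((min_eq_left' hQ1).symm.trans (min_eq_right' hP2)) (Ne.symm huv)
      · rw [min_eq_right' hQ2, min_eq_right' hP2]; exact Ne.symm huv
  · rintro (hne | huv)
    · constructor
      · by_contra h
        push_neg at h
        exact hne ((min_eq_right_of_not_le h.1).trans (min_eq_left_of_not_ge h.2).symm)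
      · by_contra h
        push_neg at h
        exact hne ((min_eq_left_of_not_ge h.2).trans (min_eq_right_of_not_le h.1).symm)
    · subst huv; exact ⟨relExt_refl u, relExt_refl u⟩
  · rintro ⟨h1, h2⟩
    by_cases huv : u = v
    · exact Or.inr huv
    · refine Or.inl ?_
      rcases h1 with hP1 | hP2 <;> rcases h2 with hQ1 | hQ2
      · rw [max_eq_right' hP1, max_eq_right' hQ1]; exact Ne.symm huv
      · exact absurd ((max_eq_left' hQ2).symm.trans (max_eq_right' hP1)) huv
      · exact absurd ((max_eq_right' hQ1).symm.trans (max_eq_left' hP2)) huv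
      · rw [max_eq_left' hQ2, max_eq_left' hP2]; exact huv
  · rintro (hne | huv)
    · constructor
      · by_contra h
        push_neg at h
        exact hne ((max_eq_left_of_not_le h.1).trans (max_eq_right_of_not_ge h.2).symm)
      · by_contra h
        push_neg at h
        exact hne ((max_eq_right_of_not_ge h.2).trans (max_eq_left_of_not_le h.1).symm)
    · subst huv; exact ⟨relExt_refl u, relExt_refl u⟩
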